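/- arXiv:1808.00181 — 8 statements merged into one kernel-verified Lean document; each statement's English description precedes it below -/
import Mathlib

section
/- Let A and B be positive definite n×n complex matrices and X an arbitrary n×n complex matrix. If the operator norm of the 2×2 block matrix H = [[A, X], [X*, B]] satisfies ||H|| > ||A + B||, then ||A + X A⁻¹ X*|| ≥ ||H|| > ||A + B||. -/
/-!
Let `t = ‖H‖`. As `H` is self-adjoint, `t` or `-t` lies in its spectrum. Since `A + B ≤ t`, the
matrix `D = t ∓ B` dominates `A`; hence it is invertible and `D⁻¹ ≤ A⁻¹`. The Schur complement
with respect to the corner `D` turns `±t ∈ σ(H)` into `t ∈ σ(±A + X D⁻¹ X*)`, and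
`±A + X D⁻¹ X* ≤ A + X A⁻¹ X*` bounds that spectrum by `‖A + X A⁻¹ X*‖`.
-/

open scoped Matrix ComplexOrder

/-- The operator norm (largest singular value) of a square complex matrix. -/
noncomputable def opNorm {m : Type*} [Fintype m] [DecidableEq m] (M : Matrix m m ℂ) : ℝ :=
  ‖Matrix.toEuclideanCLM (𝕜 := ℂ) M‖

open scoped MatrixOrder Matrix.Norms.L2Operator

namespace CStarAlgebra

variable {A : Type*} [CStarAlgebra A] [PartialOrder A] [StarOrderedRing A]

lemma le_norm_of_mem_spectrum_of_le {a b : A} (hb : IsSelfAdjoint b) (hab : a ≤ b) {t : ℝ}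
    (ht : t ∈ spectrum ℝ a) : t ≤ ‖b‖ := by
  have ha : IsSelfAdjoint a := by
    simpa using hb.sub (IsSelfAdjoint.of_nonneg (sub_nonneg.2 hab))
  exact (le_algebraMap_iff_spectrum_le ha).1 (hab.trans hb.le_algebraMap_norm_self) t ht

lemma le_norm_add_conjugate_ringInverse_of_mem_spectrum {a a' d x : A}
    (ha : IsStrictlyPositive a) (ha' : a' ≤ a) (had : a ≤ d) {t : ℝ}
    (ht : t ∈ spectrum ℝ (a' + x * Ring.inverse d * star x)) :
    t ≤ ‖a + x * Ring.inverse a * star x‖ :=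
  le_norm_of_mem_spectrum_of_le (ha.isSelfAdjoint.add (ha.isSelfAdjoint.ringInverse.conjugate x))
    (add_le_add ha' (star_right_conjugate_le_conjugate (ringInverse_le_ringInverse had ha) x)) ht

end CStarAlgebra

namespace Matrix

variable {m n R α : Type*} [Fintype m] [Fintype n] [DecidableEq m] [DecidableEq n]

lemma mem_spectrum_fromBlocks_iff_of_isUnit [CommRing R] [CommRing α] [Algebra R α]
    {A : Matrix m m α} {B : Matrix m n α} {C : Matrix n m α} {D : Matrix n n α} {c : R}
    (hD : IsUnit (algebraMap R _ c - D)) :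
    c ∈ spectrum R (fromBlocks A B C D) ↔
      c ∈ spectrum R (A + B * (algebraMap R _ c - D)⁻¹ * C) := by
  have := hD.invertible
  have hblocks : algebraMap R _ c - fromBlocks A B C D =
      fromBlocks (algebraMap R _ c - A) (-B) (-C) (algebraMap R _ c - D) := by
    ext (i | i) (j | j) <;> simp [algebraMap_eq_diagonal, diagonal_apply]
  rw [spectrum.mem_iff, spectrum.mem_iff, hblocks, isUnit_fromBlocks_iff_of_invertible₂₂,
    invOf_eq_nonsing_inv]
  simp only [Matrix.neg_mul, Matrix.mul_neg, neg_neg, sub_add_eq_sub_sub]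

variable {A B X : Matrix m m ℂ}

lemma le_norm_add_mul_inv_mul_conjTranspose_of_mem_spectrum_fromBlocks (hA : A.PosDef)
    (hB : B.PosSemidef) {t : ℝ} (hABt : A + B ≤ algebraMap ℝ _ t)
    (ht : t ∈ spectrum ℝ (fromBlocks A X Xᴴ B) ∨ -t ∈ spectrum ℝ (fromBlocks A X Xᴴ B)) :
    t ≤ ‖A + X * A⁻¹ * Xᴴ‖ := by
  rw [nonsing_inv_eq_ringInverse, ← star_eq_conjTranspose]
  rcases ht with ht | ht
  · have hAD : A ≤ algebraMap ℝ _ t - B := le_sub_iff_add_le.2 hABt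
    rw [mem_spectrum_fromBlocks_iff_of_isUnit
      (CStarAlgebra.isUnit_of_le A hAD hA.isStrictlyPositive), nonsing_inv_eq_ringInverse,
      ← star_eq_conjTranspose] at ht
    exact CStarAlgebra.le_norm_add_conjugate_ringInverse_of_mem_spectrum hA.isStrictlyPositive
      le_rfl hAD ht
  · have hAD : A ≤ algebraMap ℝ _ t - -B := by
      rw [sub_neg_eq_add]
      calc A ≤ A + B := le_add_of_nonneg_right hB.nonneg
        _ ≤ algebraMap ℝ _ t := hABt
        _ ≤ algebraMap ℝ _ t + B := le_add_of_nonneg_right hB.nonneg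
    have htneg : t ∈ spectrum ℝ (fromBlocks (-A) (-X) (-Xᴴ) (-B)) := by
      rw [← fromBlocks_neg, ← spectrum.neg_eq]
      exact Set.mem_neg.2 ht
    rw [mem_spectrum_fromBlocks_iff_of_isUnit
      (CStarAlgebra.isUnit_of_le A hAD hA.isStrictlyPositive)] at htneg
    simp only [Matrix.neg_mul, Matrix.mul_neg, neg_neg, nonsing_inv_eq_ringInverse,
      ← star_eq_conjTranspose] at htneg
    exact CStarAlgebra.le_norm_add_conjugate_ringInverse_of_mem_spectrum hA.isStrictlyPositive
      (neg_le_self hA.posSemidef.nonneg) hAD htneg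

end Matrix

open Matrix in
theorem stmt_0 {n : ℕ} (A B X : Matrix (Fin n) (Fin n) ℂ)
    (hA : A.PosDef) (hB : B.PosDef)
    (hH : opNorm (Matrix.fromBlocks A X Xᴴ B) > opNorm (A + B)) :
    opNorm (A + X * A⁻¹ * Xᴴ) ≥ opNorm (Matrix.fromBlocks A X Xᴴ B) ∧
      opNorm (Matrix.fromBlocks A X Xᴴ B) > opNorm (A + B) := by
  refine ⟨?_, hH⟩
  -- `opNorm` is definitionally the norm of the scoped instance `Matrix.Norms.L2Operator`.
  change ‖fromBlocks A X Xᴴ B‖ > ‖A + B‖ at hH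
  have : Nontrivial (Matrix (Fin n ⊕ Fin n) (Fin n ⊕ Fin n) ℂ) :=
    nontrivial_of_ne _ 0 (norm_pos_iff.1 ((norm_nonneg _).trans_lt hH))
  have hABt : A + B ≤ algebraMap ℝ _ ‖fromBlocks A X Xᴴ B‖ :=
    (hA.1.add hB.1).isSelfAdjoint.le_algebraMap_norm_self.trans (algebraMap_mono _ hH.le)
  exact le_norm_add_mul_inv_mul_conjTranspose_of_mem_spectrum_fromBlocks hA hB.posSemidef hABt
    (CStarAlgebra.norm_or_neg_norm_mem_spectrum (hA.1.fromBlocks rfl hB.1).isSelfAdjoint)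
end

section
/- Let A and B be positive definite n×n complex matrices and X an n×n complex matrix with B ≥ X* A⁻¹ X. If the operator norm of the block matrix [[A, X], [X*, B]] is strictly greater than ||A + B||, then ||A + X A⁻¹ X*|| > ||A + X* A⁻¹ X||. -/
/-!
Let `s = max ‖A + B‖ ‖A + X A⁻¹ Xᴴ‖`. Since `s - A ≥ B > 0`, the block matrix
`[[s - A, X], [Xᴴ, A]]` is positive semidefinite (its Schur complement with respect to `A` is
`s - A - X A⁻¹ Xᴴ ≥ 0`), so its other Schur complement gives `Xᴴ (s - A)⁻¹ X ≤ A ≤ s - B`.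
This is exactly the Schur condition for `s - [[A, X], [Xᴴ, B]] ≥ 0`, hence
`‖[[A, X], [Xᴴ, B]]‖ ≤ s`. The hypothesis then forces `‖A + B‖ < ‖A + X A⁻¹ Xᴴ‖`, while
`B ≥ Xᴴ A⁻¹ X` gives `‖A + Xᴴ A⁻¹ X‖ ≤ ‖A + B‖`.
-/

open scoped Matrix ComplexOrder

-- Under these scopes `‖M‖` is definitionally `opNorm M`, and `M ≤ N` means `(N - M).PosSemidef`.
open scoped MatrixOrder Matrix.Norms.L2Operator

namespace Matrix

variable {m : Type*} [Fintype m] [DecidableEq m]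

lemma conjTranspose_mul_inv_mul_le_iff_mul_inv_mul_conjTranspose_le {C D : Matrix m m ℂ}
    (hC : C.PosDef) (hD : D.PosDef) (X : Matrix m m ℂ) :
    Xᴴ * C⁻¹ * X ≤ D ↔ X * D⁻¹ * Xᴴ ≤ C := by
  let _ := hC.isUnit.invertible
  let _ := hD.isUnit.invertible
  rw [le_iff, le_iff, ← PosDef.fromBlocks₁₁ X D hC, PosDef.fromBlocks₂₂ C X hD]

lemma algebraMap_eq_fromBlocks (r : ℝ) :
    algebraMap ℝ (Matrix (m ⊕ m) (m ⊕ m) ℂ) r =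
      fromBlocks (algebraMap ℝ _ r) 0 0 (algebraMap ℝ _ r) := by
  rw [Algebra.algebraMap_eq_smul_one, Algebra.algebraMap_eq_smul_one, ← fromBlocks_one,
    fromBlocks_smul, smul_zero]

lemma fromBlocks_le_algebraMap {A B X : Matrix m m ℂ} (hA : A.PosDef) (hB : B.PosDef) {s : ℝ}
    (hAB : A + B ≤ algebraMap ℝ _ s) (hAX : A + X * A⁻¹ * Xᴴ ≤ algebraMap ℝ _ s) :
    fromBlocks A X Xᴴ B ≤ algebraMap ℝ _ s := by
  set S : Matrix m m ℂ := algebraMap ℝ _ s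
  have hSA : (S - A).PosDef := by
    have : B + (S - (A + B)) = S - A := by abel
    exact this ▸ hB.add_posSemidef hAB
  have hX : Xᴴ * (S - A)⁻¹ * X ≤ A :=
    (conjTranspose_mul_inv_mul_le_iff_mul_inv_mul_conjTranspose_le hSA hA X).mpr
      (le_sub_iff_add_le'.mpr hAX)
  have hSchur : Xᴴ * (S - A)⁻¹ * X ≤ S - B := hX.trans (le_sub_iff_add_le.mpr hAB)
  let _ := hSA.isUnit.invertible
  have hblock := (PosDef.fromBlocks₁₁ (-X) (S - B) hSA).mpr (by simpa using le_iff.mp hSchur)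
  rw [le_iff, algebraMap_eq_fromBlocks]
  simpa [sub_eq_add_neg, fromBlocks_neg, fromBlocks_add] using hblock

lemma norm_fromBlocks_le_max {A B X : Matrix m m ℂ} (hA : A.PosDef) (hB : B.PosDef)
    (hH : 0 ≤ fromBlocks A X Xᴴ B) :
    ‖fromBlocks A X Xᴴ B‖ ≤ max ‖A + B‖ ‖A + X * A⁻¹ * Xᴴ‖ := by
  have hs : 0 ≤ max ‖A + B‖ ‖A + X * A⁻¹ * Xᴴ‖ := le_max_of_le_left (norm_nonneg _)
  have hAB : 0 ≤ A + B := (hA.add hB).posSemidef.nonneg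
  have hAX : 0 ≤ A + X * A⁻¹ * Xᴴ :=
    (hA.posSemidef.add (hA.inv.posSemidef.mul_mul_conjTranspose_same X)).nonneg
  rw [CStarAlgebra.norm_le_iff_le_algebraMap _ hs hH]
  exact fromBlocks_le_algebraMap hA hB
    ((CStarAlgebra.norm_le_iff_le_algebraMap _ hs hAB).mp (le_max_left _ _))
    ((CStarAlgebra.norm_le_iff_le_algebraMap _ hs hAX).mp (le_max_right _ _))

end Matrix

theorem stmt_1 {n : ℕ} (A B X : Matrix (Fin n) (Fin n) ℂ)
    (hA : A.PosDef) (hB : B.PosDef)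
    (hBX : (B - Xᴴ * A⁻¹ * X).PosSemidef)
    (hH : opNorm (Matrix.fromBlocks A X Xᴴ B) > opNorm (A + B)) :
    opNorm (A + X * A⁻¹ * Xᴴ) > opNorm (A + Xᴴ * A⁻¹ * X) := by
  have hBlock : 0 ≤ Matrix.fromBlocks A X Xᴴ B := by
    let _ := hA.isUnit.invertible
    exact ((Matrix.PosDef.fromBlocks₁₁ X B hA).mpr hBX).nonneg
  have hmono : ‖A + Xᴴ * A⁻¹ * X‖ ≤ ‖A + B‖ := by
    have hXAX : 0 ≤ Xᴴ * A⁻¹ * X := by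
      simpa using (hA.inv.posSemidef.mul_mul_conjTranspose_same Xᴴ).nonneg
    exact CStarAlgebra.norm_le_norm_of_nonneg_of_le (add_nonneg hA.posSemidef.nonneg hXAX)
      (add_le_add_right (Matrix.le_iff.mpr hBX) A)
  have hgap : ‖A + B‖ < ‖A + X * A⁻¹ * Xᴴ‖ :=
    (lt_max_iff.mp (hH.trans_le (Matrix.norm_fromBlocks_le_max hA hB hBlock))).resolve_left
      (lt_irrefl _)
  exact hmono.trans_lt hgap
end

section
/- For every positive definite n×n complex matrix A and every unitary n×n matrix U, one has ||A + A⁻¹|| ≤ ||A + U* A⁻¹ U||. -/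
/-!
The argument works in any unital C⋆-algebra. Let `a ≥ 0` be invertible; its spectrum lies in
`[‖a⁻¹‖⁻¹, ‖a‖]`. Since `t ↦ t + t⁻¹` is convex, the functional calculus gives
`‖a + a⁻¹‖ ≤ max (s + s⁻¹) (S + S⁻¹)` with `s = ‖a⁻¹‖⁻¹`, `S = ‖a‖`. For `b = u⋆ a⁻¹ u` we have
`b ≥ S⁻¹` and `a ≥ s`, and the norm is monotone on positive elements, so `‖a + b‖` dominates
both `‖a + S⁻¹‖ = S + S⁻¹` and `‖s + b‖ = s + ‖a⁻¹‖`.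
-/

open scoped Matrix ComplexOrder

lemma add_inv_le_max_of_mem_Icc {s S t : ℝ} (hs : 0 < s) (ht : t ∈ Set.Icc s S) :
    t + t⁻¹ ≤ max (s + s⁻¹) (S + S⁻¹) := by
  have hconv : ConvexOn ℝ (Set.Ioi 0) fun x : ℝ ↦ x + x⁻¹ := by
    have h := (convexOn_id (convex_Ioi (0 : ℝ))).add (convexOn_zpow (𝕜 := ℝ) (-1))
    simp only [zpow_neg_one] at h
    exact h
  exact hconv.le_max_of_mem_Icc hs (hs.trans_le (ht.1.trans ht.2)) ht

namespace CStarAlgebra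

variable {A : Type*} [CStarAlgebra A] [PartialOrder A] [StarOrderedRing A]

lemma add_norm_le_norm_algebraMap_add [Nontrivial A] {a : A} (ha : 0 ≤ a) (c : ℝ) :
    c + ‖a‖ ≤ ‖algebraMap ℝ A c + a‖ := by
  have hmem : c + ‖a‖ ∈ spectrum ℝ (algebraMap ℝ A c + a) :=
    add_comm c ‖a‖ ▸ spectrum.add_mem_add_iff.mpr (norm_mem_spectrum_of_nonneg ha)
  exact (le_abs_self _).trans (spectrum.norm_le_norm_of_mem hmem)

lemma spectrum_subset_Icc_of_nonneg [Nontrivial A] (a : Aˣ) (ha : 0 ≤ (a : A)) :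
    spectrum ℝ (a : A) ⊆ Set.Icc ‖(↑a⁻¹ : A)‖⁻¹ ‖(a : A)‖ := by
  intro t ht
  have ht_pos : 0 < t := lt_of_le_of_ne (spectrum_nonneg_of_nonneg ha ht)
    (fun h ↦ spectrum.zero_notMem ℝ a.isUnit (h ▸ ht))
  have ht_inv : t⁻¹ ∈ spectrum ℝ (↑a⁻¹ : A) := by
    rw [← spectrum.map_inv]
    simpa using ht
  refine ⟨inv_le_of_inv_le₀ ht_pos ?_, (le_abs_self t).trans (spectrum.norm_le_norm_of_mem ht)⟩
  exact (le_abs_self _).trans (spectrum.norm_le_norm_of_mem ht_inv)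

lemma algebraMap_inv_norm_inv_le [Nontrivial A] (a : Aˣ) (ha : 0 ≤ (a : A)) :
    algebraMap ℝ A ‖(↑a⁻¹ : A)‖⁻¹ ≤ a :=
  algebraMap_le_of_le_spectrum fun _ ht ↦ (spectrum_subset_Icc_of_nonneg a ha ht).1

lemma norm_add_inv_le_max [Nontrivial A] (a : Aˣ) (ha : 0 ≤ (a : A)) :
    ‖(a : A) + ↑a⁻¹‖ ≤ max (‖(↑a⁻¹ : A)‖⁻¹ + ‖(↑a⁻¹ : A)‖) (‖(a : A)‖ + ‖(a : A)‖⁻¹) := by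
  have hcfc : (a : A) + ↑a⁻¹ = cfc (fun t : ℝ ↦ t + t⁻¹) (a : A) := by
    rw [cfc_add .., cfc_id' .., cfc_inv_id a]
  rw [hcfc]
  refine norm_cfc_le (by positivity) fun t ht ↦ ?_
  have ht_Icc := spectrum_subset_Icc_of_nonneg a ha ht
  have hs : 0 < ‖(↑a⁻¹ : A)‖⁻¹ := inv_pos.mpr (norm_pos_iff.mpr a⁻¹.ne_zero)
  have ht_pos : 0 < t := hs.trans_le ht_Icc.1
  rw [Real.norm_of_nonneg (by positivity)]
  simpa only [inv_inv] using add_inv_le_max_of_mem_Icc hs ht_Icc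

theorem norm_add_inv_le_norm_add_unitary_conj_inv (a : Aˣ) (ha : 0 ≤ (a : A)) (u : unitary A) :
    ‖(a : A) + ↑a⁻¹‖ ≤ ‖(a : A) + star (u : A) * ↑a⁻¹ * u‖ := by
  nontriviality A
  set b := star (u : A) * ↑a⁻¹ * u
  have ha_inv : 0 ≤ (↑a⁻¹ : A) := CFC.inv_nonneg_of_nonneg a ha
  have hb_nonneg : 0 ≤ b := star_left_conjugate_nonneg ha_inv _
  have hb_norm : ‖b‖ = ‖(↑a⁻¹ : A)‖ := by
    rw [CStarRing.norm_mul_coe_unitary, ← Unitary.coe_star, CStarRing.norm_coe_unitary_mul]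
  have hb_ge : algebraMap ℝ A ‖(a : A)‖⁻¹ ≤ b :=
    calc algebraMap ℝ A ‖(a : A)‖⁻¹ = star (u : A) * algebraMap ℝ A ‖(a : A)‖⁻¹ * u := by
          rw [← Algebra.commutes, mul_assoc, Unitary.coe_star_mul_self, mul_one]
      _ ≤ b := star_left_conjugate_le_conjugate
          (by simpa using algebraMap_inv_norm_inv_le a⁻¹ ha_inv) _
  refine (norm_add_inv_le_max a ha).trans (max_le ?_ ?_)
  · calc ‖(↑a⁻¹ : A)‖⁻¹ + ‖(↑a⁻¹ : A)‖ = ‖(↑a⁻¹ : A)‖⁻¹ + ‖b‖ := by rw [hb_norm]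
      _ ≤ ‖algebraMap ℝ A ‖(↑a⁻¹ : A)‖⁻¹ + b‖ := add_norm_le_norm_algebraMap_add hb_nonneg _
      _ ≤ ‖(a : A) + b‖ := norm_le_norm_of_nonneg_of_le
          (add_nonneg (algebraMap_nonneg _ (by positivity)) hb_nonneg)
          (by gcongr; exact algebraMap_inv_norm_inv_le a ha)
  · calc ‖(a : A)‖ + ‖(a : A)‖⁻¹ ≤ ‖algebraMap ℝ A ‖(a : A)‖⁻¹ + a‖ := by
          rw [add_comm]
          exact add_norm_le_norm_algebraMap_add ha _
      _ ≤ ‖(a : A) + b‖ := by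
          rw [add_comm (a : A)]
          exact norm_le_norm_of_nonneg_of_le
            (add_nonneg (algebraMap_nonneg _ (by positivity)) ha) (by gcongr)

end CStarAlgebra

open scoped Matrix.Norms.L2Operator MatrixOrder in
theorem Matrix.PosDef.opNorm_add_inv_le_opNorm_add_unitary_conj_inv {m : Type*} [Fintype m]
    [DecidableEq m] {A U : Matrix m m ℂ} (hA : A.PosDef) (hU : U ∈ Matrix.unitaryGroup m ℂ) :
    opNorm (A + A⁻¹) ≤ opNorm (A + Uᴴ * A⁻¹ * U) := by
  have h := CStarAlgebra.norm_add_inv_le_norm_add_unitary_conj_inv hA.isUnit.unit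
    (Matrix.nonneg_iff_posSemidef.mpr hA.posSemidef) ⟨U, hU⟩
  -- `opNorm` is definitionally the norm of the C⋆-algebra structure `Matrix.Norms.L2Operator`.
  rwa [Matrix.coe_units_inv, IsUnit.unit_spec] at h

theorem stmt_6 {n : ℕ} (A U : Matrix (Fin n) (Fin n) ℂ)
    (hA : A.PosDef) (hU : Uᴴ * U = 1) :
    opNorm (A + A⁻¹) ≤ opNorm (A + Uᴴ * A⁻¹ * U) :=
  hA.opNorm_add_inv_le_opNorm_add_unitary_conj_inv (Matrix.mem_unitaryGroup_iff'.mpr hU)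
end

section
/- Let A be a positive definite n×n complex matrix, U a unitary n×n matrix, and α ≥ 1 a real number. Then the operator norm of the block matrix [[A, I], [I, α A⁻¹]] is at most ||A + α U* A⁻¹ U||. -/
/-!
Write `B = A + α U* A⁻¹ U` and `c = ‖B‖`, so that `B ≤ c`. Testing this against the top and the
bottom of the spectrum of `A` (conjugating by `U` in the second case) gives `λ + α/λ ≤ c` at
`λ = λ_max` and `λ = λ_min`, hence, by convexity of `λ ↦ λ + α/λ`, on the whole spectrum, i.e.
`A + α A⁻¹ ≤ c`. The block matrix `M = [[A, I], [I, α A⁻¹]]` is positive semidefinite with Schur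
complement `(α - 1) A⁻¹`, and `c - M = [[c - A, -I], [-I, c - α A⁻¹]]` is positive semidefinite
because `c - A ≥ α A⁻¹` gives `(c - A)⁻¹ ≤ α⁻¹ A ≤ A ≤ c - α A⁻¹`. In a C⋆-algebra
`0 ≤ M ≤ c` means `‖M‖ ≤ c`.
-/

open scoped Matrix ComplexOrder

lemma add_mul_inv_le_max {a b x α : ℝ} (ha : 0 < a) (hx : x ∈ Set.Icc a b) (hα : 0 ≤ α) :
    x + α * x⁻¹ ≤ max (a + α * a⁻¹) (b + α * b⁻¹) := by
  simpa using ((convexOn_id (convex_Ioi (0 : ℝ))).add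
    ((convexOn_zpow (-1)).smul hα)).le_max_of_mem_Icc ha (ha.trans_le (hx.1.trans hx.2)) hx

lemma Matrix.inv_smul_inv {m K : Type*} [Fintype m] [DecidableEq m] [Field K]
    {A : Matrix m m K} (hA : IsUnit A) {k : K} (hk : k ≠ 0) : (k • A⁻¹)⁻¹ = k⁻¹ • A := by
  refine inv_eq_left_inv ?_
  rw [smul_mul_smul_comm, inv_mul_cancel₀ hk, mul_nonsing_inv _ ((isUnit_iff_isUnit_det A).mp hA),
    one_smul]

open Matrix
open scoped Matrix.Norms.L2Operator MatrixOrder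

namespace Matrix.PosDef

variable {m : Type*} [Fintype m] [DecidableEq m] {A U : Matrix m m ℂ} {α c : ℝ}

lemma inv_eq_cfc (hA : A.PosDef) : A⁻¹ = cfc (·⁻¹ : ℝ → ℝ) A := by
  rw [nonsing_inv_eq_ringInverse, cfc_ringInverse_id A hA.isUnit hA.isHermitian.isSelfAdjoint]

lemma smul_inv_eq_cfc (hA : A.PosDef) (α : ℝ) :
    (α : ℂ) • A⁻¹ = cfc (fun x : ℝ => α * x⁻¹) A := by
  rw [cfc_const_mul _ _ _ (A.finite_real_spectrum.continuousOn _), ← inv_eq_cfc hA,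
    Complex.coe_smul]

lemma add_smul_inv_eq_cfc (hA : A.PosDef) (α : ℝ) :
    A + (α : ℂ) • A⁻¹ = cfc (fun x : ℝ => x + α * x⁻¹) A := by
  rw [smul_inv_eq_cfc hA]
  nth_rewrite 1 [← cfc_id' ℝ A hA.isHermitian.isSelfAdjoint]
  exact (cfc_add (a := A) _ _ (A.finite_real_spectrum.continuousOn _)
    (A.finite_real_spectrum.continuousOn _)).symm

lemma add_mul_inv_le_of_isGreatest (hA : A.PosDef) (hU : Uᴴ * U = 1) (hα : 0 ≤ α)
    (hc : A + (α : ℂ) • (Uᴴ * A⁻¹ * U) ≤ algebraMap ℝ _ c) {μ : ℝ}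
    (hμ : IsGreatest (spectrum ℝ A) μ) : μ + α * μ⁻¹ ≤ c := by
  have hinv : algebraMap ℝ _ μ⁻¹ ≤ A⁻¹ := by
    rw [inv_eq_cfc hA]
    exact algebraMap_le_cfc _ _ _
      (fun x hx => inv_anti₀ (hA.isStrictlyPositive.spectrum_pos hx) (hμ.2 hx))
      (A.finite_real_spectrum.continuousOn _) hA.isHermitian.isSelfAdjoint
  have hconj : algebraMap ℝ _ μ⁻¹ ≤ Uᴴ * A⁻¹ * U := by
    simpa only [star_eq_conjTranspose, ← Algebra.commutes, mul_assoc, hU, mul_one] using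
      star_left_conjugate_le_conjugate hinv U
  have hA_le : A ≤ algebraMap ℝ _ (c - α * μ⁻¹) := by
    rw [map_sub, le_sub_iff_add_le, map_mul, ← Algebra.smul_def]
    rw [Complex.coe_smul] at hc
    exact (add_le_add le_rfl (smul_le_smul_of_nonneg_left hconj hα)).trans hc
  linarith [(le_algebraMap_iff_spectrum_le hA.isHermitian.isSelfAdjoint).1 hA_le μ hμ.1]

lemma add_mul_inv_le_of_isLeast (hA : A.PosDef) (hU : Uᴴ * U = 1)
    (hc : A + (α : ℂ) • (Uᴴ * A⁻¹ * U) ≤ algebraMap ℝ _ c) {μ : ℝ}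
    (hμ : IsLeast (spectrum ℝ A) μ) : μ + α * μ⁻¹ ≤ c := by
  have hA_ge : algebraMap ℝ _ μ ≤ A :=
    (algebraMap_le_iff_le_spectrum hA.isHermitian.isSelfAdjoint).2 hμ.2
  have hconj : (α : ℂ) • (Uᴴ * A⁻¹ * U) ≤ algebraMap ℝ _ (c - μ) := by
    rw [map_sub, le_sub_iff_add_le']
    exact (add_le_add hA_ge le_rfl).trans hc
  have hUU : U * Uᴴ = 1 := mul_eq_one_comm.mp hU
  have hconj_inv : U * (Uᴴ * A⁻¹ * U) * Uᴴ = A⁻¹ := by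
    rw [← mul_assoc, ← mul_assoc, hUU, one_mul, mul_assoc, hUU, mul_one]
  have hconj_const : U * algebraMap ℝ _ (c - μ) * Uᴴ = algebraMap ℝ _ (c - μ) := by
    rw [← Algebra.commutes, mul_assoc, hUU, mul_one]
  have hinv : (α : ℂ) • A⁻¹ ≤ algebraMap ℝ _ (c - μ) := by
    simpa only [star_eq_conjTranspose, mul_smul_comm, smul_mul_assoc, hconj_inv, hconj_const]
      using star_right_conjugate_le_conjugate hconj U
  rw [smul_inv_eq_cfc hA, cfc_le_algebraMap_iff _ _ _ (A.finite_real_spectrum.continuousOn _)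
    hA.isHermitian.isSelfAdjoint] at hinv
  linarith [hinv μ hμ.1]

lemma add_smul_inv_le_of_add_smul_conj_inv_le (hA : A.PosDef) (hU : Uᴴ * U = 1) (hα : 0 ≤ α)
    (hc : A + (α : ℂ) • (Uᴴ * A⁻¹ * U) ≤ algebraMap ℝ _ c) :
    A + (α : ℂ) • A⁻¹ ≤ algebraMap ℝ _ c := by
  rw [add_smul_inv_eq_cfc hA]
  refine cfc_le_algebraMap _ _ _ (fun x hx => ?_) (A.finite_real_spectrum.continuousOn _)
    hA.isHermitian.isSelfAdjoint
  obtain ⟨a, ha⟩ := A.finite_real_spectrum.isCompact.exists_isLeast ⟨x, hx⟩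
  obtain ⟨b, hb⟩ := A.finite_real_spectrum.isCompact.exists_isGreatest ⟨x, hx⟩
  calc x + α * x⁻¹ ≤ max (a + α * a⁻¹) (b + α * b⁻¹) :=
        add_mul_inv_le_max (hA.isStrictlyPositive.spectrum_pos ha.1) ⟨ha.2 hx, hb.2 hx⟩ hα
    _ ≤ c := max_le (add_mul_inv_le_of_isLeast hA hU hc ha)
        (add_mul_inv_le_of_isGreatest hA hU hα hc hb)

lemma fromBlocks_one_nonneg (hA : A.PosDef) (hα : 1 ≤ α) :
    0 ≤ fromBlocks A 1 1 ((α : ℂ) • A⁻¹) := by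
  have := hA.isUnit.invertible
  have hschur : A⁻¹ ≤ (α : ℂ) • A⁻¹ := by
    rw [Complex.coe_smul]
    exact le_smul_of_one_le_left hA.inv.posSemidef.nonneg hα
  have h := (hA.fromBlocks₁₁ (1 : Matrix m m ℂ) ((α : ℂ) • A⁻¹)).2
  rw [conjTranspose_one, Matrix.one_mul, Matrix.mul_one, ← le_iff] at h
  exact (h hschur).nonneg

lemma fromBlocks_one_le (hA : A.PosDef) (hα : 1 ≤ α)
    (hc : A + (α : ℂ) • A⁻¹ ≤ algebraMap ℝ _ c) :
    fromBlocks A 1 1 ((α : ℂ) • A⁻¹) ≤ algebraMap ℝ _ c := by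
  have hα0 : 0 < α := zero_lt_one.trans_le hα
  set P := algebraMap ℝ (Matrix m m ℂ) c - A
  have hP : (α : ℂ) • A⁻¹ ≤ P := le_sub_iff_add_le'.2 hc
  have hα_pos : IsStrictlyPositive ((α : ℂ) • A⁻¹) :=
    (hA.inv.smul (mod_cast hα0)).isStrictlyPositive
  have hP_pos : P.PosDef := (hα_pos.of_le hP).posDef
  have := hP_pos.isUnit.invertible
  have hschur : P⁻¹ ≤ algebraMap ℝ _ c - (α : ℂ) • A⁻¹ :=
    calc P⁻¹ ≤ ((α : ℂ) • A⁻¹)⁻¹ := by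
          simpa only [← nonsing_inv_eq_ringInverse] using
            CStarAlgebra.ringInverse_le_ringInverse hP hα_pos
      _ = (α : ℂ)⁻¹ • A := inv_smul_inv hA.isUnit (mod_cast hα0.ne')
      _ ≤ A := by
          rw [← Complex.ofReal_inv, Complex.coe_smul]
          exact smul_le_of_le_one_left hA.posSemidef.nonneg (inv_le_one_of_one_le₀ hα)
      _ ≤ algebraMap ℝ _ c - (α : ℂ) • A⁻¹ := le_sub_iff_add_le.2 hc
  have hblock : algebraMap ℝ _ c - fromBlocks A 1 1 ((α : ℂ) • A⁻¹) =
      fromBlocks P (-1) (-1)ᴴ (algebraMap ℝ _ c - (α : ℂ) • A⁻¹) := by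
    ext (i | i) (j | j) <;> simp [P, algebraMap_eq_diagonal, one_apply, diagonal_apply]
  rw [le_iff, hblock, hP_pos.fromBlocks₁₁, ← le_iff]
  simpa using hschur

end Matrix.PosDef

theorem stmt_7 {n : ℕ} (A U : Matrix (Fin n) (Fin n) ℂ)
    (hA : A.PosDef) (hU : Uᴴ * U = 1) (α : ℝ) (hα : 1 ≤ α) :
    opNorm (Matrix.fromBlocks A 1 1 ((α : ℂ) • A⁻¹)) ≤
      opNorm (A + (α : ℂ) • (Uᴴ * A⁻¹ * U)) := by
  set B := A + (α : ℂ) • (Uᴴ * A⁻¹ * U)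
  have hB : IsSelfAdjoint B :=
    hA.isHermitian.add
      ((isHermitian_conjTranspose_mul_mul U hA.inv.isHermitian).smul (Complex.conj_ofReal α))
  have hbound : A + (α : ℂ) • A⁻¹ ≤ algebraMap ℝ _ ‖B‖ :=
    hA.add_smul_inv_le_of_add_smul_conj_inv_le hU (by linarith) hB.le_algebraMap_norm_self
  rw [opNorm, opNorm, ← cstar_norm_def, ← cstar_norm_def]
  exact (CStarAlgebra.norm_le_iff_le_algebraMap _ (norm_nonneg B)
    (hA.fromBlocks_one_nonneg hα)).2 (hA.fromBlocks_one_le hα hbound)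
end

section
/- Let A be a positive definite n×n complex matrix and X an n×n complex matrix. Then the operator norm of the block matrix [[A, X], [X*, X* A⁻¹ X]] equals ||A + A^{-1/2} X X* A^{-1/2}||, where A^{-1/2} is the inverse of the positive square root of A. -/
/-!
With `S = A^{1/2}`, the rectangular matrix `C = [S, S⁻¹X]` satisfies
`Cᴴ C = [[A, X], [Xᴴ, Xᴴ A⁻¹ X]]` and `C Cᴴ = A + S⁻¹ X Xᴴ S⁻¹`.
Both products have operator norm `‖C‖²` (C⋆-identity for `C` and for `Cᴴ`).
-/

open scoped Matrix ComplexOrder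

/-- The positive semidefinite square root of a positive semidefinite matrix
(the definition Mathlib had under this name in December 2024, since removed). -/
noncomputable def Matrix.PosSemidef.sqrt {n : Type*} [Fintype n] [DecidableEq n] {A : Matrix n n ℂ}
    (hA : A.PosSemidef) : Matrix n n ℂ :=
  hA.1.eigenvectorUnitary.1 * Matrix.diagonal ((↑) ∘ (√·) ∘ hA.1.eigenvalues) *
  (star hA.1.eigenvectorUnitary : Matrix n n ℂ)

open scoped Matrix.Norms.L2Operator

namespace Matrix

section Sqrt

variable {n : Type*} [Fintype n] [DecidableEq n] {A : Matrix n n ℂ}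

theorem PosSemidef.conjTranspose_sqrt (hA : A.PosSemidef) : hA.sqrtᴴ = hA.sqrt := by
  have hdiag : star ((↑) ∘ (√·) ∘ hA.1.eigenvalues : n → ℂ) = (↑) ∘ (√·) ∘ hA.1.eigenvalues := by
    funext i
    simp
  rw [PosSemidef.sqrt, conjTranspose_mul, conjTranspose_mul, diagonal_conjTranspose, hdiag,
    ← star_eq_conjTranspose, ← star_eq_conjTranspose, star_star, Matrix.mul_assoc]

theorem PosSemidef.sqrt_mul_sqrt (hA : A.PosSemidef) : hA.sqrt * hA.sqrt = A := by
  set U := hA.1.eigenvectorUnitary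
  have hdiag : diagonal ((↑) ∘ (√·) ∘ hA.1.eigenvalues : n → ℂ) *
      diagonal ((↑) ∘ (√·) ∘ hA.1.eigenvalues) = diagonal (RCLike.ofReal ∘ hA.1.eigenvalues) := by
    rw [diagonal_mul_diagonal]
    congr 1
    funext i
    simp only [Function.comp_apply, ← Complex.ofReal_mul,
      Real.mul_self_sqrt (hA.eigenvalues_nonneg i)]
    rfl
  conv_rhs => rw [hA.1.spectral_theorem, Unitary.conjStarAlgAut_apply, ← hdiag]
  simp only [PosSemidef.sqrt, Matrix.mul_assoc]
  rw [← Matrix.mul_assoc (star U : Matrix n n ℂ) U.1, UnitaryGroup.star_mul_self, Matrix.one_mul]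

theorem PosDef.isUnit_det_sqrt (hA : A.PosDef) : IsUnit hA.posSemidef.sqrt.det := by
  have hsq : IsUnit (hA.posSemidef.sqrt.det * hA.posSemidef.sqrt.det) := by
    rw [← det_mul, hA.posSemidef.sqrt_mul_sqrt]
    exact hA.det_pos.ne'.isUnit
  exact isUnit_of_mul_isUnit_left hsq

end Sqrt

section Factorization

variable {m n R : Type*} [Fintype m] [DecidableEq m] [CommRing R] [StarRing R]
  {A S : Matrix m m R} (X : Matrix m n R)

theorem conjTranspose_fromCols_mul_fromCols_of_mul_self_eq (hS : Sᴴ = S) (hSS : S * S = A)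
    (hdet : IsUnit S.det) :
    (fromCols S (S⁻¹ * X))ᴴ * fromCols S (S⁻¹ * X) = fromBlocks A X Xᴴ (Xᴴ * A⁻¹ * X) := by
  have hSinv : (S⁻¹)ᴴ = S⁻¹ := by rw [conjTranspose_nonsing_inv, hS]
  have hAinv : A⁻¹ = S⁻¹ * S⁻¹ := by rw [← hSS, Matrix.mul_inv_rev]
  rw [conjTranspose_fromCols_eq_fromRows_conjTranspose, fromRows_mul_fromCols, hS, hSS,
    conjTranspose_mul, hSinv, hAinv, mul_nonsing_inv_cancel_left (A := S) X hdet,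
    nonsing_inv_mul_cancel_right (A := S) Xᴴ hdet]
  simp only [Matrix.mul_assoc]

theorem fromCols_mul_conjTranspose_fromCols_of_mul_self_eq [Fintype n] (hS : Sᴴ = S)
    (hSS : S * S = A) :
    fromCols S (S⁻¹ * X) * (fromCols S (S⁻¹ * X))ᴴ = A + S⁻¹ * (X * Xᴴ) * S⁻¹ := by
  have hSinv : (S⁻¹)ᴴ = S⁻¹ := by rw [conjTranspose_nonsing_inv, hS]
  rw [conjTranspose_fromCols_eq_fromRows_conjTranspose, fromCols_mul_fromRows, hS, hSS,
    conjTranspose_mul, hSinv]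
  simp only [Matrix.mul_assoc]

end Factorization

theorem l2_opNorm_conjTranspose_mul_self_eq_self_mul_conjTranspose {m n 𝕜 : Type*}
    [Fintype m] [Fintype n] [DecidableEq m] [DecidableEq n] [RCLike 𝕜] (C : Matrix m n 𝕜) :
    ‖Cᴴ * C‖ = ‖C * Cᴴ‖ := by
  calc ‖Cᴴ * C‖ = ‖Cᴴ‖ * ‖Cᴴ‖ := by rw [l2_opNorm_conjTranspose_mul_self, l2_opNorm_conjTranspose]
    _ = ‖C * Cᴴ‖ := by rw [← l2_opNorm_conjTranspose_mul_self, conjTranspose_conjTranspose]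

end Matrix

theorem stmt_8 {n : ℕ} (A X : Matrix (Fin n) (Fin n) ℂ) (hA : A.PosDef) :
    opNorm (Matrix.fromBlocks A X Xᴴ (Xᴴ * A⁻¹ * X)) =
      opNorm (A + (hA.posSemidef.sqrt)⁻¹ * (X * Xᴴ) * (hA.posSemidef.sqrt)⁻¹) := by
  have hS := hA.posSemidef.conjTranspose_sqrt
  have hSS := hA.posSemidef.sqrt_mul_sqrt
  rw [← Matrix.conjTranspose_fromCols_mul_fromCols_of_mul_self_eq X hS hSS hA.isUnit_det_sqrt,
    ← Matrix.fromCols_mul_conjTranspose_fromCols_of_mul_self_eq X hS hSS]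
  exact Matrix.l2_opNorm_conjTranspose_mul_self_eq_self_mul_conjTranspose _
end

section
/- Let A = diag(1, 2, 3), C = diag(1, 1/2, 2), and let U be the 3×3 permutation (unitary) matrix with U e₁ = e₃, U e₂ = e₁, U e₃ = e₂ (i.e., rows (0,1,0), (0,0,1), (1,0,0)). Then A⁻¹ ≤ C, A and C commute, ||A + U* C U|| = 7/2, and the operator norm of the 6×6 block matrix [[A, I], [I, C]] is at least (5 + √5)/2, which is strictly greater than 7/2. Hence ||[[A, I], [I, C]]|| > ||A + U* C U||. -/
open scoped Matrix ComplexOrder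

/-!
The sum `A + U* C U` is the diagonal matrix `diag(3, 3, 7/2)`, whose operator norm is its largest
entry. The block matrix `[[A, I], [I, C]]` with diagonal `A` and `C` splits into the `2 × 2` blocks
`[[aᵢ, 1], [1, cᵢ]]`; for `i = 3` this is `[[3, 1], [1, 2]]`, whose top eigenvalue `(5 + √5)/2`
therefore bounds the norm of the block matrix from below.
-/

open Matrix

section

variable {n : Type*} [Fintype n] [DecidableEq n]

lemma opNorm_diagonal (v : n → ℂ) : opNorm (diagonal v) = ‖v‖ :=
  l2_opNorm_diagonal v

lemma norm_le_opNorm_of_mulVec_eq_smul {M : Matrix n n ℂ} {x : n → ℂ} {μ : ℂ} (hx : x ≠ 0)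
    (h : M *ᵥ x = μ • x) : ‖μ‖ ≤ opNorm M := by
  have hpos : 0 < ‖WithLp.toLp 2 x‖ := norm_pos_iff.mpr (by simpa using hx)
  have hle := (toEuclideanCLM (𝕜 := ℂ) M).le_opNorm (WithLp.toLp 2 x)
  rw [toEuclideanCLM_toLp, h, WithLp.toLp_smul, norm_smul] at hle
  exact le_of_mul_le_mul_right hle hpos

lemma fromBlocks_diagonal_one_mulVec_single {α : Type*} [NonAssocSemiring α] (a c : n → α)
    (i : n) (x y : α) :
    fromBlocks (diagonal a) 1 1 (diagonal c) *ᵥ Sum.elim (Pi.single i x) (Pi.single i y) =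
      Sum.elim (Pi.single i (a i * x + y)) (Pi.single i (x + c i * y)) := by
  rw [fromBlocks_mulVec, Sum.elim_comp_inl, Sum.elim_comp_inr, one_mulVec, one_mulVec,
    diagonal_mulVec_single, diagonal_mulVec_single, Pi.single_add, Pi.single_add]

lemma norm_le_opNorm_fromBlocks_diagonal_one {a c : n → ℂ} (i : n) {μ x y : ℂ} (hx : x ≠ 0)
    (h₁ : a i * x + y = μ * x) (h₂ : x + c i * y = μ * y) :
    ‖μ‖ ≤ opNorm (fromBlocks (diagonal a) 1 1 (diagonal c)) := by
  refine norm_le_opNorm_of_mulVec_eq_smul (x := Sum.elim (Pi.single i x) (Pi.single i y)) ?_ ?_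
  · intro h
    exact hx (by simpa using congrFun h (Sum.inl i))
  · rw [fromBlocks_diagonal_one_mulVec_single, h₁, h₂]
    ext (j | j) <;> simp [Pi.single_apply]

end

lemma five_add_sqrt_five_div_two_sq : ((5 + √5) / 2) ^ 2 = 5 * ((5 + √5) / 2) - 5 := by
  have h5 : √5 ^ 2 = 5 := Real.sq_sqrt (by norm_num)
  linear_combination h5 / 4

lemma seven_div_two_lt_five_add_sqrt_five_div_two : (7 : ℝ) / 2 < (5 + √5) / 2 := by
  have h : (2 : ℝ) < √5 := by
    rw [Real.lt_sqrt (by norm_num)]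
    norm_num
  linarith

theorem stmt_11 :
    let A : Matrix (Fin 3) (Fin 3) ℂ := Matrix.diagonal ![1, 2, 3]
    let C : Matrix (Fin 3) (Fin 3) ℂ := Matrix.diagonal ![1, 1/2, 2]
    let U : Matrix (Fin 3) (Fin 3) ℂ := !![0, 1, 0; 0, 0, 1; 1, 0, 0]
    (C - A⁻¹).PosSemidef ∧ A * C = C * A ∧
      opNorm (A + Uᴴ * C * U) = 7 / 2 ∧
      opNorm (Matrix.fromBlocks A 1 1 C) ≥ (5 + Real.sqrt 5) / 2 ∧
      (5 + Real.sqrt 5) / 2 > 7 / 2 ∧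
      opNorm (Matrix.fromBlocks A 1 1 C) > opNorm (A + Uᴴ * C * U) := by
  intro A C U
  have hAinv : A⁻¹ = diagonal ![1, 1/2, 1/3] := by
    refine inv_eq_right_inv ?_
    rw [diagonal_mul_diagonal, ← diagonal_one]
    congr 1; ext i; fin_cases i <;> norm_num
  have hsum : A + Uᴴ * C * U = diagonal ![3, 3, 7/2] := by
    ext i j
    fin_cases i <;> fin_cases j <;>
      simp [A, C, U, mul_apply, Fin.sum_univ_three, diagonal_apply] <;> norm_num
  have hsum_norm : opNorm (A + Uᴴ * C * U) = 7 / 2 := by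
    rw [hsum, opNorm_diagonal]
    refine le_antisymm ((pi_norm_le_iff_of_nonneg (by norm_num)).2 fun i => ?_) ?_
    · fin_cases i <;> norm_num
    · simpa using norm_le_pi_norm ![(3 : ℂ), 3, 7/2] 2
  have hblock : (5 + √5) / 2 ≤ opNorm (fromBlocks A 1 1 C) := by
    set μ : ℝ := (5 + √5) / 2
    have hμ : (μ : ℂ) ^ 2 = 5 * μ - 5 := by exact_mod_cast five_add_sqrt_five_div_two_sq
    have hle := norm_le_opNorm_fromBlocks_diagonal_one (a := ![1, 2, 3]) (c := ![1, 1/2, 2]) 2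
      (μ := μ) (x := 1) (y := μ - 3) one_ne_zero (by simp)
      (by simp only [cons_val]; linear_combination -hμ)
    rwa [Complex.norm_of_nonneg (by positivity)] at hle
  have hgap := seven_div_two_lt_five_add_sqrt_five_div_two
  refine ⟨?_, commute_diagonal _ _, hsum_norm, hblock, hgap, by linarith⟩
  rw [hAinv, diagonal_sub, posSemidef_diagonal_iff]
  intro i
  fin_cases i <;> norm_num [Complex.le_def]
end

section
/- Let D be a positive semidefinite n×n complex matrix and U a unitary n×n matrix. Assume that for every positive definite n×n matrix A and every Hermitian n×n matrix C with C ≥ D A⁻¹ D, the operator norm of the block matrix [[A, D], [D, C]] is at most ||A + U* C U||. Then ||D + U* D U|| = 2 ||D||. -/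
open scoped Matrix ComplexOrder

/-!
Test the hypothesis with `A = ε • 1 + D` and `C = D`. The Schur complement `D - D A⁻¹ D` is
positive semidefinite because the block matrix `[[ε • 1 + D, D], [D, D]]` is
`(ε • 1) ⊕ 0 + J D Jᴴ` with `J = [1; 1]`. Compressing the block matrix by `J` gives
`‖ε • 1 + 4 • D‖ ≤ 2 ‖[[A, D], [D, D]]‖`, and `‖4 • D‖ ≤ ‖ε • 1 + 4 • D‖` by monotonicity of the
norm on positive elements. Hence `2 ‖D‖ ≤ ε + ‖D + Uᴴ D U‖` for all `ε > 0`; the reverse inequality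
is the triangle inequality, as conjugation by a unitary preserves the norm.
-/

open scoped Matrix.Norms.L2Operator MatrixOrder

namespace Matrix

variable {𝕜 m : Type*} [RCLike 𝕜] [Fintype m] [DecidableEq m]

-- Not `= 1`: the norm of `1` vanishes when `m` is empty.
lemma l2_opNorm_one_le : ‖(1 : Matrix m m 𝕜)‖ ≤ 1 := by
  have h := l2_opNorm_conjTranspose_mul_self (1 : Matrix m m 𝕜)
  rw [conjTranspose_one, one_mul] at h
  nlinarith [norm_nonneg (1 : Matrix m m 𝕜)]

lemma norm_smul_one_add_le (c : 𝕜) (M : Matrix m m 𝕜) : ‖c • 1 + M‖ ≤ ‖c‖ + ‖M‖ := by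
  have hc : ‖c • (1 : Matrix m m 𝕜)‖ ≤ ‖c‖ := by
    rw [norm_smul]
    exact mul_le_of_le_one_right (norm_nonneg c) l2_opNorm_one_le
  linarith [norm_add_le (c • (1 : Matrix m m 𝕜)) M]

lemma norm_add_add_add_le_two_mul_norm_fromBlocks (A B C D : Matrix m m 𝕜) :
    ‖A + B + C + D‖ ≤ 2 * ‖fromBlocks A B C D‖ := by
  set J : Matrix (m ⊕ m) m 𝕜 := fromRows 1 1
  have hJ : ‖J‖ * ‖J‖ ≤ 2 := by
    rw [← l2_opNorm_conjTranspose_mul_self, conjTranspose_fromRows_eq_fromCols_conjTranspose,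
      fromCols_mul_fromRows, conjTranspose_one, one_mul]
    linarith [norm_add_le (1 : Matrix m m 𝕜) 1, l2_opNorm_one_le (𝕜 := 𝕜) (m := m)]
  have hconj : Jᴴ * fromBlocks A B C D * J = A + B + C + D := by
    rw [Matrix.mul_assoc, conjTranspose_fromRows_eq_fromCols_conjTranspose, fromBlocks_mul_fromRows,
      fromCols_mul_fromRows]
    simp only [conjTranspose_one, mul_one, one_mul]
    abel
  calc ‖A + B + C + D‖ = ‖Jᴴ * fromBlocks A B C D * J‖ := by rw [hconj]
    _ ≤ ‖Jᴴ‖ * ‖fromBlocks A B C D‖ * ‖J‖ :=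
      (l2_opNorm_mul _ _).trans (mul_le_mul_of_nonneg_right (l2_opNorm_mul _ _) (norm_nonneg _))
    _ = ‖J‖ * ‖J‖ * ‖fromBlocks A B C D‖ := by rw [l2_opNorm_conjTranspose]; ring
    _ ≤ 2 * ‖fromBlocks A B C D‖ := by gcongr

lemma PosSemidef.fromBlocks_smul_one_add {D : Matrix m m 𝕜} (hD : D.PosSemidef) {c : 𝕜}
    (hc : 0 ≤ c) : (fromBlocks (c • 1 + D) D D D).PosSemidef := by
  set I₁ : Matrix (m ⊕ m) m 𝕜 := fromRows 1 0
  set J : Matrix (m ⊕ m) m 𝕜 := fromRows 1 1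
  have hsplit : fromBlocks (c • 1 + D) D D D = I₁ * (c • 1 : Matrix m m 𝕜) * I₁ᴴ + J * D * Jᴴ := by
    simp only [I₁, J, conjTranspose_fromRows_eq_fromCols_conjTranspose, fromRows_mul, mul_fromCols,
      fromCols_fromRows_eq_fromBlocks, fromBlocks_add, conjTranspose_one, conjTranspose_zero,
      mul_one, mul_zero, zero_mul, one_mul, zero_add]
  rw [hsplit]
  exact ((PosSemidef.one.smul hc).mul_mul_conjTranspose_same _).add
    (hD.mul_mul_conjTranspose_same _)

lemma PosSemidef.sub_mul_inv_smul_one_add_mul {D : Matrix m m 𝕜} (hD : D.PosSemidef) {c : 𝕜}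
    (hc : 0 < c) : (D - D * (c • 1 + D)⁻¹ * D).PosSemidef := by
  have hA : (c • 1 + D).PosDef := (PosDef.one.smul hc).add_posSemidef hD
  have := hA.isUnit.invertible
  have hschur := PosDef.fromBlocks₁₁ D D hA
  rw [hD.isHermitian.eq] at hschur
  exact hschur.mp (hD.fromBlocks_smul_one_add hc.le)

lemma PosSemidef.two_mul_norm_le_norm_fromBlocks {D : Matrix m m ℂ} (hD : D.PosSemidef) {c : ℂ}
    (hc : 0 ≤ c) : 2 * ‖D‖ ≤ ‖fromBlocks (c • 1 + D) D D D‖ := by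
  have hle : (4 : ℂ) • D ≤ c • 1 + D + D + D + D := by
    rw [le_iff, show c • 1 + D + D + D + D - (4 : ℂ) • D = c • 1 by module]
    exact PosSemidef.one.smul hc
  have hnorm := CStarAlgebra.norm_le_norm_of_nonneg_of_le
    (nonneg_iff_posSemidef.mpr (hD.smul (by norm_num : (0 : ℂ) ≤ 4))) hle
  rw [norm_smul] at hnorm
  norm_num at hnorm
  linarith [norm_add_add_add_le_two_mul_norm_fromBlocks (c • 1 + D) D D D]

end Matrix

lemma opNorm_eq_norm {m : Type*} [Fintype m] [DecidableEq m] (M : Matrix m m ℂ) :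
    opNorm M = ‖M‖ := rfl

theorem stmt_13 {n : ℕ} (D U : Matrix (Fin n) (Fin n) ℂ)
    (hD : D.PosSemidef) (hU : Uᴴ * U = 1)
    (h : ∀ A C : Matrix (Fin n) (Fin n) ℂ, A.PosDef → C.IsHermitian →
      (C - D * A⁻¹ * D).PosSemidef →
      opNorm (Matrix.fromBlocks A D D C) ≤ opNorm (A + Uᴴ * C * U)) :
    opNorm (D + Uᴴ * D * U) = 2 * opNorm D := by
  simp only [opNorm_eq_norm] at h ⊢
  have hUu : U ∈ unitary (Matrix (Fin n) (Fin n) ℂ) := Matrix.mem_unitaryGroup_iff'.mpr hU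
  have hconj : ‖Uᴴ * D * U‖ = ‖D‖ := by
    rw [CStarRing.norm_mul_mem_unitary _ hUu, ← Matrix.star_eq_conjTranspose,
      CStarRing.norm_mem_unitary_mul _ (Unitary.star_mem hUu)]
  refine le_antisymm ((norm_add_le _ _).trans_eq (by rw [hconj, two_mul])) ?_
  refine le_of_forall_pos_le_add fun ε hε => ?_
  have hεC : (0 : ℂ) < ε := Complex.zero_lt_real.mpr hε
  have hA : ((ε : ℂ) • 1 + D).PosDef := (Matrix.PosDef.one.smul hεC).add_posSemidef hD
  calc 2 * ‖D‖ ≤ ‖Matrix.fromBlocks ((ε : ℂ) • 1 + D) D D D‖ :=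
        hD.two_mul_norm_le_norm_fromBlocks hεC.le
    _ ≤ ‖(ε : ℂ) • 1 + D + Uᴴ * D * U‖ :=
        h _ _ hA hD.isHermitian (hD.sub_mul_inv_smul_one_add_mul hεC)
    _ ≤ ‖D + Uᴴ * D * U‖ + ε := by
        rw [add_assoc]
        exact (Matrix.norm_smul_one_add_le _ _).trans_eq
          (by rw [Complex.norm_of_nonneg hε.le, add_comm])
end

section
/- Let A and B be positive semidefinite n×n complex matrices with ||A + B|| = ||A|| + ||B||. Then for all real numbers α ≥ 0 and β ≥ 0 one has ||α A + β B|| = α ||A|| + β ||B||. -/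
open scoped Matrix ComplexOrder

/-! The upper bound is the triangle inequality. For the lower bound, with `0 ≤ β ≤ α`, split
`α • (a + b) = (α • a + β • b) + (α - β) • b`: the triangle inequality and
`‖a + b‖ = ‖a‖ + ‖b‖` give `α (‖a‖ + ‖b‖) ≤ ‖α • a + β • b‖ + (α - β) ‖b‖`. -/

section NormAddEq

variable {E : Type*} [SeminormedAddCommGroup E] [NormedSpace ℝ E] {a b : E}

theorem le_norm_smul_add_smul_of_norm_add_eq (h : ‖a + b‖ = ‖a‖ + ‖b‖) {α β : ℝ}
    (hβ : 0 ≤ β) (hβα : β ≤ α) : α * ‖a‖ + β * ‖b‖ ≤ ‖α • a + β • b‖ := by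
  have hα : 0 ≤ α := hβ.trans hβα
  have hsplit : α • (a + b) = (α • a + β • b) + (α - β) • b := by
    rw [smul_add, sub_smul]; abel
  have hbound : α * (‖a‖ + ‖b‖) ≤ ‖α • a + β • b‖ + (α - β) * ‖b‖ :=
    calc α * (‖a‖ + ‖b‖) = ‖α • (a + b)‖ := by rw [norm_smul, Real.norm_of_nonneg hα, h]
      _ ≤ ‖α • a + β • b‖ + ‖(α - β) • b‖ := hsplit ▸ norm_add_le _ _
      _ = ‖α • a + β • b‖ + (α - β) * ‖b‖ := by
        rw [norm_smul, Real.norm_of_nonneg (sub_nonneg.2 hβα)]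
  linarith

theorem norm_smul_add_smul_of_norm_add_eq (h : ‖a + b‖ = ‖a‖ + ‖b‖) {α β : ℝ}
    (hα : 0 ≤ α) (hβ : 0 ≤ β) : ‖α • a + β • b‖ = α * ‖a‖ + β * ‖b‖ := by
  refine le_antisymm ?_ ?_
  · calc ‖α • a + β • b‖ ≤ ‖α • a‖ + ‖β • b‖ := norm_add_le _ _
      _ = α * ‖a‖ + β * ‖b‖ := by
        rw [norm_smul, norm_smul, Real.norm_of_nonneg hα, Real.norm_of_nonneg hβ]
  · rcases le_total β α with hβα | hαβ
    · exact le_norm_smul_add_smul_of_norm_add_eq h hβ hβα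
    · rw [add_comm a, add_comm ‖a‖] at h
      simpa only [add_comm] using le_norm_smul_add_smul_of_norm_add_eq h hα hαβ

end NormAddEq

theorem stmt_16_general {n : ℕ} (A B : Matrix (Fin n) (Fin n) ℂ)
    (h : opNorm (A + B) = opNorm A + opNorm B) :
    ∀ α β : ℝ, 0 ≤ α → 0 ≤ β →
      opNorm ((α : ℂ) • A + (β : ℂ) • B) = α * opNorm A + β * opNorm B := by
  intro α β hα hβ
  have real_smul (r : ℝ) (M : Matrix (Fin n) (Fin n) ℂ) :
      Matrix.toEuclideanCLM (𝕜 := ℂ) ((r : ℂ) • M) = r • Matrix.toEuclideanCLM (𝕜 := ℂ) M := by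
    rw [map_smul]; rfl
  rw [opNorm, map_add] at h
  rw [opNorm, map_add, real_smul, real_smul]
  exact norm_smul_add_smul_of_norm_add_eq h hα hβ

theorem stmt_16 {n : ℕ} (A B : Matrix (Fin n) (Fin n) ℂ)
    (hA : A.PosSemidef) (hB : B.PosSemidef)
    (h : opNorm (A + B) = opNorm A + opNorm B) :
    ∀ α β : ℝ, 0 ≤ α → 0 ≤ β →
      opNorm ((α : ℂ) • A + (β : ℂ) • B) = α * opNorm A + β * opNorm B :=
  stmt_16_general A B h
end
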